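/- arXiv:2602.18404 — 6 statements merged into one kernel-verified Lean document; each statement's English description precedes it below -/
import Mathlib

section
/- Let M ∈ ℝ^{n×n} be invertible. Then there exists a constant C > 0 such that M + λI is invertible and 0 < ‖(M + λI)⁻¹‖ ≤ C for all λ ≥ 0 if and only if M has no negative real eigenvalue. -/
attribute [local instance] Matrix.linftyOpNormedAddCommGroup Matrix.linftyOpNormedRing

attribute [local instance] Matrix.linftyOpNormedSpace

/-- For an invertible real `n×n` matrix `M`, there exists `C > 0` such that `M + λI`
is invertible and `0 < ‖(M + λI)⁻¹‖ ≤ C` for all `λ ≥ 0` if and only if `M` has no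
negative real eigenvalue. -/
theorem stmt_1 (n : ℕ) (hn : 1 ≤ n) (M : Matrix (Fin n) (Fin n) ℝ) (hM : IsUnit M.det) :
    (∃ C : ℝ, 0 < C ∧ ∀ lam : ℝ, 0 ≤ lam →
        IsUnit (M + lam • (1 : Matrix (Fin n) (Fin n) ℝ)).det ∧
        0 < ‖(M + lam • (1 : Matrix (Fin n) (Fin n) ℝ))⁻¹‖ ∧
        ‖(M + lam • (1 : Matrix (Fin n) (Fin n) ℝ))⁻¹‖ ≤ C) ↔
      ∀ mu : ℝ, mu < 0 → (M - mu • (1 : Matrix (Fin n) (Fin n) ℝ)).det ≠ 0 := by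
  have hne : Nonempty (Fin n) := ⟨⟨0, hn⟩⟩
  constructor
  · rintro ⟨C, hC, hall⟩ mu hmu
    have h := (hall (-mu) (by linarith)).1
    have he : M - mu • (1 : Matrix (Fin n) (Fin n) ℝ)
        = M + (-mu) • (1 : Matrix (Fin n) (Fin n) ℝ) := by
      rw [neg_smul, ← sub_eq_add_neg]
    rw [he]
    exact h.ne_zero
  · intro h
    -- every `M + lam • 1` with `lam ≥ 0` is invertible
    have hunit : ∀ lam : ℝ, 0 ≤ lam → IsUnit (M + lam • (1 : Matrix (Fin n) (Fin n) ℝ)).det := by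
      intro lam hlam
      rcases eq_or_lt_of_le hlam with hl | hl
      · simpa [← hl] using hM
      · have h2 := h (-lam) (by linarith)
        have he : M - (-lam) • (1 : Matrix (Fin n) (Fin n) ℝ)
            = M + lam • (1 : Matrix (Fin n) (Fin n) ℝ) := by
          rw [neg_smul, sub_neg_eq_add]
        rw [he] at h2
        exact isUnit_iff_ne_zero.2 h2
    -- positivity of the norm of the inverse
    have hpos : ∀ lam : ℝ, 0 ≤ lam →
        0 < ‖(M + lam • (1 : Matrix (Fin n) (Fin n) ℝ))⁻¹‖ := by
      intro lam hlam
      have hu := hunit lam hlam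
      have hne0 : (M + lam • (1 : Matrix (Fin n) (Fin n) ℝ))⁻¹ ≠ 0 := by
        intro h0
        have h1 := Matrix.nonsing_inv_mul _ hu
        rw [h0, Matrix.zero_mul] at h1
        exact one_ne_zero h1.symm
      exact norm_pos_iff.2 hne0
    -- continuity of the map `lam ↦ ‖(M + lam • 1)⁻¹‖` on `[0, ‖M‖ + 1]`
    have hcont : ContinuousOn
        (fun lam : ℝ => ‖(M + lam • (1 : Matrix (Fin n) (Fin n) ℝ))⁻¹‖)
        (Set.Icc (0:ℝ) (‖M‖ + 1)) := by
      have hc1 : Continuous (fun lam : ℝ => M + lam • (1 : Matrix (Fin n) (Fin n) ℝ)) :=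
        continuous_const.add (continuous_id.smul continuous_const)
      have hc2 : ContinuousOn
          (fun lam : ℝ => Ring.inverse (M + lam • (1 : Matrix (Fin n) (Fin n) ℝ)))
          (Set.Icc (0:ℝ) (‖M‖ + 1)) := by
        intro lam hlam
        have hu : IsUnit (M + lam • (1 : Matrix (Fin n) (Fin n) ℝ)) :=
          (Matrix.isUnit_iff_isUnit_det _).2 (hunit lam hlam.1)
        rcases hu with ⟨u, hu⟩
        have hca : ContinuousAt Ring.inverse (M + lam • (1 : Matrix (Fin n) (Fin n) ℝ)) :=
          hu ▸ NormedRing.inverse_continuousAt u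
        exact (ContinuousAt.comp (g := Ring.inverse)
          (f := fun lam : ℝ => M + lam • (1 : Matrix (Fin n) (Fin n) ℝ))
          hca (hc1.continuousAt (x := lam))).continuousWithinAt
      refine hc2.norm.congr fun lam _ => ?_
      simp [Matrix.nonsing_inv_eq_ringInverse]
    -- bound on the compact interval
    obtain ⟨C₀, hC₀⟩ := (isCompact_Icc (a := (0:ℝ))
      (b := ‖M‖ + 1)).exists_bound_of_continuousOn hcont
    refine ⟨max C₀ 1, lt_of_lt_of_le one_pos (le_max_right _ _), fun lam hlam => ?_⟩
    refine ⟨hunit lam hlam, hpos lam hlam, ?_⟩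
    rcases le_or_gt lam (‖M‖ + 1) with hle | hgt
    · have := hC₀ lam ⟨hlam, hle⟩
      exact le_trans (le_trans (le_abs_self _) this) (le_max_left _ _)
    · -- large `lam`: `‖(M + lam • 1)⁻¹‖ ≤ 1/(lam - ‖M‖) ≤ 1`
      set A := M + lam • (1 : Matrix (Fin n) (Fin n) ℝ) with hA
      have hu : IsUnit A.det := hunit lam hlam
      have hmul : A * A⁻¹ = 1 := Matrix.mul_nonsing_inv _ hu
      have key : lam • A⁻¹ = 1 - M * A⁻¹ := by
        have : (M + lam • (1 : Matrix (Fin n) (Fin n) ℝ)) * A⁻¹ = 1 := hmul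
        rw [add_mul, Matrix.smul_mul, Matrix.one_mul] at this
        linear_combination (norm := module) this
      have hnorm : lam * ‖A⁻¹‖ ≤ 1 + ‖M‖ * ‖A⁻¹‖ := by
        have h1 : ‖lam • A⁻¹‖ = lam * ‖A⁻¹‖ := by
          rw [norm_smul, Real.norm_eq_abs, abs_of_nonneg hlam]
        calc lam * ‖A⁻¹‖ = ‖(1 : Matrix (Fin n) (Fin n) ℝ) - M * A⁻¹‖ := by rw [← h1, key]
          _ ≤ ‖(1 : Matrix (Fin n) (Fin n) ℝ)‖ + ‖M * A⁻¹‖ := norm_sub_le _ _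
          _ ≤ 1 + ‖M‖ * ‖A⁻¹‖ := by
              gcongr
              · exact le_of_eq norm_one
              · exact norm_mul_le _ _
      have hMn : 0 ≤ ‖M‖ := norm_nonneg _
      have hAin : 0 ≤ ‖A⁻¹‖ := norm_nonneg _
      have : ‖A⁻¹‖ ≤ 1 := by nlinarith
      exact le_trans this (le_max_right _ _)
end

section
/- Let 0 ≤ β₀ < β₁ < ⋯ < β_m be real numbers and 0 < θ₀ < θ₁ < ⋯ < θ_m be real numbers. Then the generalized Vandermonde matrix with entries (θ_i^{β_j})_{i,j=0}^m has strictly positive determinant. -/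
open Finset

/-- A nontrivial generalized polynomial `x ↦ ∑ c j * x ^ β j` with strictly increasing real
exponents cannot vanish at `m+1` distinct positive points. -/
lemma gen_vdm_aux : ∀ (m : ℕ) (β c s : Fin (m + 1) → ℝ), StrictMono β → StrictMono s →
    0 < s 0 → (∀ i, ∑ j, c j * s i ^ β j = 0) → ∀ j, c j = 0 := by
  intro m
  induction m with
  | zero =>
    intro β c s _ _ hs0 h j
    have := h 0
    simp [Fin.sum_univ_one] at this
    have hpos : (0:ℝ) < s 0 ^ β 0 := Real.rpow_pos_of_pos hs0 _
    rcases this with h' | h'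
    · exact Fin.cases h' (fun i => i.elim0) j
    · exact absurd h' hpos.ne'
  | succ m ih =>
    intro β c s hβ hs hs0 h
    have hspos : ∀ i, 0 < s i := fun i => lt_of_lt_of_le hs0 (hs.monotone (Fin.zero_le i))
    -- g x = ∑ c j * x ^ (β j - β 0), vanishes at all s i
    set g : ℝ → ℝ := fun x => ∑ j, c j * x ^ (β j - β 0) with hg_def
    set g' : ℝ → ℝ := fun x => ∑ j, (c j * (β j - β 0)) * x ^ (β j - β 0 - 1) with hg'_def
    have hderiv : ∀ x : ℝ, 0 < x → HasDerivAt g (g' x) x := by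
      intro x hx
      have : HasDerivAt g (∑ j, c j * ((β j - β 0) * x ^ (β j - β 0 - 1))) x := by
        apply HasDerivAt.fun_sum
        intro j _
        exact (Real.hasDerivAt_rpow_const (Or.inl hx.ne')).const_mul (c j)
      convert this using 1
      simp only [hg'_def]
      exact Finset.sum_congr rfl fun j _ => by ring
    have hgzero : ∀ i, g (s i) = 0 := by
      intro i
      have : g (s i) = (∑ j, c j * s i ^ β j) / s i ^ β 0 := by
        rw [Finset.sum_div]
        refine Finset.sum_congr rfl fun j _ => ?_
        rw [Real.rpow_sub (hspos i)]
        ring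
      rw [this, h i, zero_div]
    -- Rolle between consecutive nodes
    have hrolle : ∀ i : Fin (m + 1), ∃ x ∈ Set.Ioo (s i.castSucc) (s i.succ), g' x = 0 := by
      intro i
      have hab : s i.castSucc < s i.succ := hs Fin.castSucc_lt_succ
      refine exists_hasDerivAt_eq_zero (f := g) (f' := g') hab ?_
        ((hgzero _).trans (hgzero _).symm) ?_
      · intro x hx
        have hxpos : 0 < x := lt_of_lt_of_le (hspos i.castSucc) hx.1
        exact (hderiv x hxpos).continuousAt.continuousWithinAt
      · intro x hx
        exact hderiv x (lt_trans (hspos i.castSucc) hx.1)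
    choose t ht hgt using hrolle
    have htpos : 0 < t 0 := lt_trans (hspos 0) (ht 0).1
    have htmono : StrictMono t := by
      intro i j hij
      calc t i < s i.succ := (ht i).2
        _ ≤ s j.castSucc := hs.monotone (by
            rw [Fin.le_castSucc_iff] at *
            exact_mod_cast Nat.succ_lt_succ hij)
        _ < t j := (ht j).1
    -- apply IH to the derivative
    have hβ' : StrictMono (fun j : Fin (m + 1) => β j.succ - β 0 - 1) := by
      intro i j hij
      simp only [sub_lt_sub_iff_right]
      exact hβ (Fin.succ_lt_succ_iff.mpr hij)
    have hsum : ∀ i : Fin (m + 1),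
        ∑ j : Fin (m + 1), (c j.succ * (β j.succ - β 0)) * t i ^ (β j.succ - β 0 - 1) = 0 := by
      intro i
      have := hgt i
      simp only [hg'_def] at this
      rw [Fin.sum_univ_succ] at this
      simpa using this
    have hc' : ∀ j : Fin (m + 1), c j.succ * (β j.succ - β 0) = 0 :=
      ih (fun j => β j.succ - β 0 - 1) (fun j => c j.succ * (β j.succ - β 0)) t hβ' htmono
        htpos hsum
    have hcs : ∀ j : Fin (m + 1), c j.succ = 0 := by
      intro j
      have hβne : β j.succ - β 0 ≠ 0 :=
        sub_ne_zero.mpr (hβ (Fin.succ_pos j)).ne'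
      exact (mul_eq_zero.mp (hc' j)).resolve_right hβne
    have hc0 : c 0 = 0 := by
      have := h 0
      rw [Fin.sum_univ_succ] at this
      simp only [hcs, zero_mul, Finset.sum_const_zero, add_zero] at this
      have hpos : (0:ℝ) < s 0 ^ β 0 := Real.rpow_pos_of_pos hs0 _
      rcases mul_eq_zero.mp this with h' | h'
      · exact h'
      · exact absurd h' hpos.ne'
    exact Fin.cases hc0 hcs

/-- Nonvanishing of the generalized Vandermonde determinant. -/
lemma gen_vdm_det_ne_zero (m : ℕ) (β θ : Fin (m + 1) → ℝ)
    (hβmono : StrictMono β) (hθmono : StrictMono θ) (hθ0 : 0 < θ 0) :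
    (Matrix.of fun i j : Fin (m + 1) => θ i ^ β j).det ≠ 0 := by
  intro hdet
  obtain ⟨v, hv, hmul⟩ := (Matrix.exists_mulVec_eq_zero_iff).mpr hdet
  apply hv
  funext j
  refine gen_vdm_aux m β v θ hβmono hθmono hθ0 (fun i => ?_) j
  have := congrFun hmul i
  simpa [Matrix.mulVec, dotProduct, mul_comm] using this

/-- Positivity of the generalised Vandermonde determinant: for strictly increasing
nonnegative real exponents `β₀ < ⋯ < β_m` and strictly increasing positive nodes
`θ₀ < ⋯ < θ_m`, the matrix `(θ_i ^ β_j)` has strictly positive determinant. -/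
theorem stmt_4 (m : ℕ) (β θ : Fin (m + 1) → ℝ)
    (hβmono : StrictMono β) (hβ0 : 0 ≤ β 0)
    (hθmono : StrictMono θ) (hθ0 : 0 < θ 0) :
    0 < (Matrix.of fun i j : Fin (m + 1) => θ i ^ β j).det := by
  have hθpos : ∀ i, 0 < θ i := fun i => lt_of_lt_of_le hθ0 (hθmono.monotone (Fin.zero_le i))
  -- homotopy of exponents
  set E : ℝ → Fin (m + 1) → ℝ := fun t j => (1 - t) * β j + t * (j : ℝ) with hE_def
  have hEmono : ∀ t ∈ Set.Icc (0:ℝ) 1, StrictMono (E t) := by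
    intro t ht i j hij
    have h1 : (i : ℝ) < (j : ℝ) := by exact_mod_cast hij
    have h2 : β i < β j := hβmono hij
    rcases lt_or_eq_of_le ht.2 with ht1 | ht1
    · have : (1 - t) * β i < (1 - t) * β j := by
        apply mul_lt_mul_of_pos_left h2 (by linarith)
      have : t * (i:ℝ) ≤ t * (j:ℝ) := mul_le_mul_of_nonneg_left h1.le ht.1
      simp only [hE_def]
      nlinarith
    · simp only [hE_def, ← ht1]
      nlinarith
  set F : ℝ → ℝ := fun t => (Matrix.of fun i j : Fin (m + 1) => θ i ^ E t j).det with hF_def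
  have hFcont : Continuous F := by
    apply Continuous.matrix_det
    apply continuous_matrix
    intro i j
    have : (fun t => (Matrix.of fun i j : Fin (m + 1) => θ i ^ E t j) i j)
        = fun t => Real.exp (Real.log (θ i) * E t j) := by
      funext t
      simp [Real.rpow_def_of_pos (hθpos i)]
    rw [this]
    simp only [hE_def]
    continuity
  have hFne : ∀ t ∈ Set.Icc (0:ℝ) 1, F t ≠ 0 := fun t ht =>
    gen_vdm_det_ne_zero m (E t) θ (hEmono t ht) hθmono hθ0
  have hF1 : 0 < F 1 := by
    have hE1 : ∀ j : Fin (m + 1), E 1 j = (j : ℝ) := by intro j; simp [hE_def]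
    have : F 1 = (Matrix.vandermonde θ).det := by
      simp only [hF_def]
      congr 1
      funext i j
      simp [Matrix.vandermonde, hE1, Real.rpow_natCast]
    rw [this, Matrix.det_vandermonde]
    apply Finset.prod_pos
    intro i _
    apply Finset.prod_pos
    intro j hj
    rw [Finset.mem_Ioi] at hj
    exact sub_pos.mpr (hθmono hj)
  have hF0 : F 0 = (Matrix.of fun i j : Fin (m + 1) => θ i ^ β j).det := by
    simp only [hF_def]
    congr 1
    funext i j
    simp [hE_def]
  rw [← hF0]
  by_contra hle
  push_neg at hle
  have hF0lt : F 0 < 0 := lt_of_le_of_ne hle (hFne 0 (by norm_num))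
  have := intermediate_value_Icc (by norm_num : (0:ℝ) ≤ 1) hFcont.continuousOn
  have h0mem : (0:ℝ) ∈ Set.Icc (F 0) (F 1) := ⟨hF0lt.le, hF1.le⟩
  obtain ⟨t, htmem, htval⟩ := this h0mem
  exact hFne t htmem htval
end

section
/- Let 0 ≤ β₀ < β₁ < ⋯ < β_m and 0 < θ₀ < θ₁ < ⋯ < θ_m. Then the generalized Vandermonde matrix (θ_i^{β_j}) is invertible. -/
open Finset

/-- A nontrivial real "exponential polynomial" `x ↦ ∑ c j * x ^ γ j` with `n` distinct
real exponents cannot vanish at `n` distinct positive points. -/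
lemma aux_rpow_zero : ∀ (n : ℕ) (c γ : Fin n → ℝ), Function.Injective γ →
    ∀ t : Fin n → ℝ, StrictMono t → (∀ i, 0 < t i) →
    (∀ i, ∑ j, c j * t i ^ γ j = 0) → ∀ j, c j = 0 := by
  intro n
  induction n with
  | zero => intro c γ _ t _ _ _ j; exact j.elim0
  | succ n ih =>
    intro c γ hγ t ht htpos hsum
    set g : ℝ → ℝ := fun x => ∑ j, c j * x ^ (γ j - γ 0) with hgdef
    set g' : ℝ → ℝ := fun x => ∑ j, c j * ((γ j - γ 0) * x ^ (γ j - γ 0 - 1)) with hg'def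
    have hgz : ∀ i, g (t i) = 0 := by
      intro i
      have h := hsum i
      have hx := htpos i
      have : g (t i) = (t i) ^ (-γ 0) * ∑ j, c j * t i ^ γ j := by
        rw [Finset.mul_sum]
        refine Finset.sum_congr rfl fun j _ => ?_
        rw [Real.rpow_sub hx, Real.rpow_neg hx.le]
        field_simp
      rw [this, h, mul_zero]
    have hderiv : ∀ x : ℝ, 0 < x → HasDerivAt g (g' x) x := by
      intro x hx
      exact HasDerivAt.fun_sum fun j _ =>
        (Real.hasDerivAt_rpow_const (Or.inl hx.ne')).const_mul (c j)
    -- Rolle between consecutive points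
    have hroll : ∀ k : Fin n, ∃ s ∈ Set.Ioo (t k.castSucc) (t k.succ), g' s = 0 := by
      intro k
      have hlt : t k.castSucc < t k.succ := ht Fin.castSucc_lt_succ
      refine exists_hasDerivAt_eq_zero (f := g) (f' := g') hlt ?_
        ((hgz k.castSucc).trans (hgz k.succ).symm) ?_
      · intro x hx
        have hxpos : 0 < x := lt_of_lt_of_le (htpos _) hx.1
        exact (hderiv x hxpos).continuousAt.continuousWithinAt
      · intro x hx
        exact hderiv x (lt_trans (htpos _) hx.1)
    choose s hs hs' using hroll
    have hspos : ∀ k, 0 < s k := fun k => lt_trans (htpos _) (hs k).1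
    have hsmono : StrictMono s := by
      intro k k' hkk'
      calc s k < t k.succ := (hs k).2
        _ ≤ t k'.castSucc := ht.monotone (by
            simp only [Fin.le_def, Fin.val_succ, Fin.coe_castSucc]
            exact hkk')
        _ < s k' := (hs k').1
    -- apply induction hypothesis to g'
    have key : ∀ j : Fin n, c j.succ * (γ j.succ - γ 0) = 0 := by
      refine ih (fun j => c j.succ * (γ j.succ - γ 0))
        (fun j => γ j.succ - γ 0 - 1) ?_ s hsmono hspos ?_
      · intro j j' h
        have : γ j.succ = γ j'.succ := by linarith [sub_left_inj.mp h]
        exact Fin.succ_injective _ (hγ this)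
      · intro i
        have h0 : ∑ j, c j * ((γ j - γ 0) * s i ^ (γ j - γ 0 - 1)) = 0 := hs' i
        rw [Fin.sum_univ_succ] at h0
        simp only [sub_self, zero_mul, mul_zero, zero_add] at h0
        rw [← h0]
        exact Finset.sum_congr rfl fun j _ => by ring
    have hcsucc : ∀ j : Fin n, c j.succ = 0 := by
      intro j
      rcases mul_eq_zero.mp (key j) with h | h
      · exact h
      · exfalso
        exact (Fin.succ_ne_zero j) (hγ (by linarith))
    -- now the first coefficient
    have h0 := hsum 0
    rw [Fin.sum_univ_succ] at h0
    simp only [hcsucc, zero_mul, Finset.sum_const_zero, add_zero] at h0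
    have hpos : (0:ℝ) < t 0 ^ γ 0 := Real.rpow_pos_of_pos (htpos 0) _
    intro j
    refine Fin.cases ?_ hcsucc j
    by_contra hc0
    exact hc0 (by
      rcases mul_eq_zero.mp h0 with h | h
      · exact h
      · exact absurd h hpos.ne')

/-- Invertibility of the generalised Vandermonde matrix: for strictly increasing
nonnegative real exponents `β₀ < ⋯ < β_m` and strictly increasing positive nodes
`θ₀ < ⋯ < θ_m`, the matrix `(θ_i ^ β_j)` is invertible. -/
theorem stmt_5 (m : ℕ) (β θ : Fin (m + 1) → ℝ)
    (hβmono : StrictMono β) (hβ0 : 0 ≤ β 0)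
    (hθmono : StrictMono θ) (hθ0 : 0 < θ 0) :
    IsUnit (Matrix.of fun i j : Fin (m + 1) => θ i ^ β j) := by
  set M : Matrix (Fin (m+1)) (Fin (m+1)) ℝ :=
    Matrix.of fun i j : Fin (m + 1) => θ i ^ β j with hM
  rw [Matrix.isUnit_iff_isUnit_det]
  rw [isUnit_iff_ne_zero]
  intro hdet
  obtain ⟨v, hv, hMv⟩ := Matrix.exists_mulVec_eq_zero_iff.mpr hdet
  have hθpos : ∀ i, 0 < θ i := fun i => lt_of_lt_of_le hθ0 (hθmono.monotone (Fin.zero_le i))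
  have hv0 : ∀ j, v j = 0 := by
    refine aux_rpow_zero (m+1) v β hβmono.injective θ hθmono hθpos ?_
    intro i
    have := congrFun hMv i
    simp only [Matrix.mulVec, dotProduct, Pi.zero_apply] at this
    rw [← this]
    exact Finset.sum_congr rfl fun j _ => by rw [hM]; simp [mul_comm]
  exact hv (funext hv0)
end

section
/- Fix α ∈ (0,1), m ≥ 0, and collocation points 0 < θ₀ < θ₁ < ⋯ < θ_m ≤ 1. Let W be the Vandermonde matrix W_{ij} = θ_i^j, D₁ = diag(θ₀^α,…,θ_m^α), D₂ = diag(c₀,…,c_m) with c_j = Γ(j+1)/Γ(j+1+α). Then the matrix M = W⁻¹ D₁⁻¹ W D₂⁻¹ has no negative real eigenvalue. -/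
open Matrix

open Finset Set

lemma descartes {ι : Type*} [DecidableEq ι] :
    ∀ (k : ℕ) (s : Finset ι), s.card = k + 1 →
    ∀ (μ v : ι → ℝ), Set.InjOn μ s → (∀ j ∈ s, v j ≠ 0) →
    ∀ (Z : Finset ℝ), (∀ x ∈ Z, 0 < x) →
    (∀ x ∈ Z, ∑ j ∈ s, v j * x ^ μ j = 0) → Z.card ≤ k := by
  intro k
  induction k with
  | zero =>
    intro s hs μ v _ hv Z hZpos hZzero
    obtain ⟨j0, hj0⟩ := Finset.card_eq_one.mp hs
    subst hj0
    rcases Finset.eq_empty_or_nonempty Z with h | ⟨x, hx⟩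
    · simp [h]
    · exfalso
      have h1 := hZzero x hx
      rw [Finset.sum_singleton] at h1
      exact (mul_ne_zero (hv j0 (Finset.mem_singleton_self j0))
        (Real.rpow_pos_of_pos (hZpos x hx) _).ne') h1
  | succ k IH =>
    intro s hs μ v hinj hv Z hZpos hZzero
    by_contra hcon
    push_neg at hcon
    obtain ⟨Z', hZ'sub, hZ'card⟩ := Finset.exists_subset_card_eq (s := Z) (n := k + 2) hcon
    obtain ⟨j0, hj0⟩ : s.Nonempty := Finset.card_pos.mp (by omega)
    set μ0 := μ j0 with hμ0
    set G : ℝ → ℝ := fun x => ∑ j ∈ s, v j * x ^ (μ j - μ0) with hG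
    set G' : ℝ → ℝ := fun x => ∑ j ∈ s, v j * ((μ j - μ0) * x ^ (μ j - μ0 - 1)) with hG'
    have hGzero : ∀ x ∈ Z', G x = 0 := by
      intro x hx
      have hxpos : 0 < x := hZpos x (hZ'sub hx)
      have : G x = (∑ j ∈ s, v j * x ^ μ j) / x ^ μ0 := by
        rw [Finset.sum_div]
        refine Finset.sum_congr rfl fun j _ => ?_
        rw [Real.rpow_sub hxpos, mul_div_assoc]
      rw [this, hZzero x (hZ'sub hx), zero_div]
    have hGderiv : ∀ x : ℝ, 0 < x → HasDerivAt G (G' x) x := by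
      intro x hx
      exact HasDerivAt.fun_sum fun j _ =>
        ((Real.hasDerivAt_rpow_const (Or.inl hx.ne')).const_mul (v j))
    -- order the zeros
    set z : Fin (k + 2) → ℝ := fun i => ((Z'.orderIsoOfFin hZ'card) i : ℝ) with hz
    have hzmono : StrictMono z := fun a b hab => (Z'.orderIsoOfFin hZ'card).lt_iff_lt.mpr hab
    have hzmem : ∀ i, z i ∈ Z' := fun i => ((Z'.orderIsoOfFin hZ'card) i).2
    have hzpos : ∀ i, 0 < z i := fun i => hZpos _ (hZ'sub (hzmem i))
    have hroll : ∀ i : Fin (k + 1), ∃ c ∈ Set.Ioo (z i.castSucc) (z i.succ), G' c = 0 := by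
      intro i
      have hab : z i.castSucc < z i.succ := hzmono (Fin.castSucc_lt_succ (i := i))
      have hcont : ContinuousOn G (Set.Icc (z i.castSucc) (z i.succ)) := by
        intro x hx
        exact ((hGderiv x (lt_of_lt_of_le (hzpos _) hx.1)).continuousAt).continuousWithinAt
      exact exists_hasDerivAt_eq_zero hab hcont
        (by rw [hGzero _ (hzmem _), hGzero _ (hzmem _)])
        (fun x hx => hGderiv x (lt_trans (hzpos _) hx.1))
    choose c hc1 hc2 using hroll
    have hcmono : StrictMono c := by
      intro a b hab
      have h1 : (c a) < z a.succ := (hc1 a).2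
      have h2 : z b.castSucc < c b := (hc1 b).1
      have h3 : z a.succ ≤ z b.castSucc := by
        apply hzmono.monotone
        rw [Fin.le_def]
        simpa using hab
      linarith
    set Z'' : Finset ℝ := Finset.image c Finset.univ with hZ''
    have hZ''card : Z''.card = k + 1 := by
      rw [hZ'', Finset.card_image_of_injective _ hcmono.injective, Finset.card_univ,
        Fintype.card_fin]
    have hZ''pos : ∀ x ∈ Z'', 0 < x := by
      intro x hx
      obtain ⟨i, _, rfl⟩ := Finset.mem_image.mp hx
      exact lt_trans (hzpos _) (hc1 i).1
    have hZ''zero : ∀ x ∈ Z'', ∑ j ∈ s.erase j0, (v j * (μ j - μ0)) * x ^ (μ j - μ0 - 1) = 0 := by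
      intro x hx
      obtain ⟨i, _, rfl⟩ := Finset.mem_image.mp hx
      have heq : ∑ j ∈ s.erase j0, (v j * (μ j - μ0)) * (c i) ^ (μ j - μ0 - 1)
          = ∑ j ∈ s, v j * ((μ j - μ0) * (c i) ^ (μ j - μ0 - 1)) := by
        rw [← Finset.sum_erase s (a := j0)
          (f := fun j => v j * ((μ j - μ0) * (c i) ^ (μ j - μ0 - 1))) (by simp [hμ0])]
        exact Finset.sum_congr rfl fun j _ => by ring
      rw [heq]
      exact hc2 i
    have hscard : (s.erase j0).card = k + 1 := by
      rw [Finset.card_erase_of_mem hj0, hs]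
      omega
    have hfin := IH (s.erase j0) hscard (fun j => μ j - μ0 - 1) (fun j => v j * (μ j - μ0))
      (fun a ha b hb hab => hinj (Finset.mem_of_mem_erase ha) (Finset.mem_of_mem_erase hb)
        (by have h := hab; dsimp at h; linarith))
      (fun j hj => mul_ne_zero (hv j (Finset.mem_of_mem_erase hj))
        (sub_ne_zero.mpr fun h => (Finset.ne_of_mem_erase hj) (hinj (Finset.mem_of_mem_erase hj) hj0 h)))
      Z'' hZ''pos hZ''zero
    omega

open Matrix in
lemma gvdm_ne_zero {n : ℕ} (θ : Fin n → ℝ) (hθ : StrictMono θ) (hpos : ∀ i, 0 < θ i)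
    (μ : Fin n → ℝ) (hμ : Function.Injective μ) :
    (Matrix.of fun i j : Fin n => θ i ^ μ j).det ≠ 0 := by
  rcases n with _ | k
  · simp [Matrix.det_isEmpty]
  intro hdet
  obtain ⟨v, hv, hmul⟩ := Matrix.exists_mulVec_eq_zero_iff.mpr hdet
  classical
  set s : Finset (Fin (k + 1)) := Finset.univ.filter (fun j => v j ≠ 0) with hsdef
  have hsne : s.Nonempty := by
    obtain ⟨j, hj⟩ := Function.ne_iff.mp hv
    exact ⟨j, by simp only [hsdef, Finset.mem_filter, Finset.mem_univ, true_and]; simpa using hj⟩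
  obtain ⟨k0, hk0⟩ : ∃ k0, s.card = k0 + 1 :=
    ⟨s.card - 1, (Nat.succ_pred_eq_of_pos (Finset.card_pos.mpr hsne)).symm⟩
  have hZcard : (Finset.univ.image θ).card = k + 1 := by
    rw [Finset.card_image_of_injective _ hθ.injective, Finset.card_univ, Fintype.card_fin]
  have hb := descartes k0 s hk0 μ v (hμ.injOn) (fun j hj => (Finset.mem_filter.mp hj).2)
    (Finset.univ.image θ)
    (fun x hx => by obtain ⟨i, _, rfl⟩ := Finset.mem_image.mp hx; exact hpos i)
    (fun x hx => by
      obtain ⟨i, _, rfl⟩ := Finset.mem_image.mp hx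
      have h1 := congrFun hmul i
      simp only [Matrix.mulVec, dotProduct, Pi.zero_apply, Matrix.of_apply] at h1
      rw [← h1]
      rw [Finset.sum_filter]
      refine Finset.sum_congr rfl fun j _ => ?_
      by_cases hvj : v j = 0 <;> simp [hvj, mul_comm])
  have hcard_le : s.card ≤ k + 1 := by
    calc s.card ≤ Finset.univ.card := Finset.card_le_card (Finset.filter_subset _ _)
    _ = k + 1 := by simp
  omega

open Matrix in
lemma gvdm_pos {n : ℕ} (θ : Fin n → ℝ) (hθ : StrictMono θ) (hpos : ∀ i, 0 < θ i)
    (μ : Fin n → ℝ) (hμ : StrictMono μ) :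
    0 < (Matrix.of fun i j : Fin n => θ i ^ μ j).det := by
  have hmono : ∀ t ∈ Set.Icc (0 : ℝ) 1,
      StrictMono fun j : Fin n => (1 - t) * μ j + t * (j : ℕ) := by
    intro t ht j j' hj
    have h1 : μ j < μ j' := hμ hj
    have h2 : ((j : ℕ) : ℝ) < ((j' : ℕ) : ℝ) := by exact_mod_cast hj
    simp only
    nlinarith [mul_nonneg (sub_nonneg.2 ht.2) (sub_nonneg.2 h1.le),
      mul_nonneg ht.1 (sub_nonneg.2 h2.le), ht.1, ht.2]
  have hcont : Continuous fun t : ℝ =>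
      (Matrix.of fun i j : Fin n => θ i ^ ((1 - t) * μ j + t * (j : ℕ))).det := by
    apply Continuous.matrix_det
    apply continuous_matrix
    intro i j
    have heq : (fun t : ℝ =>
        (Matrix.of fun i j : Fin n => θ i ^ ((1 - t) * μ j + t * (j : ℕ))) i j)
        = fun t : ℝ => Real.exp (Real.log (θ i) * ((1 - t) * μ j + t * (j : ℕ))) := by
      funext t
      rw [Matrix.of_apply, Real.rpow_def_of_pos (hpos i)]
    rw [heq]
    fun_prop
  have hne : ∀ t ∈ Set.Icc (0 : ℝ) 1,
      (Matrix.of fun i j : Fin n => θ i ^ ((1 - t) * μ j + t * (j : ℕ))).det ≠ 0 := fun t ht =>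
    gvdm_ne_zero θ hθ hpos _ (hmono t ht).injective
  have hM1 : (Matrix.of fun i j : Fin n => θ i ^ ((1 - (1:ℝ)) * μ j + 1 * (j : ℕ)))
      = Matrix.vandermonde θ := by
    ext i j
    rw [Matrix.of_apply, Matrix.vandermonde_apply,
      show (1 - (1:ℝ)) * μ j + 1 * ((j : ℕ) : ℝ) = ((j : ℕ) : ℝ) by ring, Real.rpow_natCast]
  have hM0 : (Matrix.of fun i j : Fin n => θ i ^ ((1 - (0:ℝ)) * μ j + 0 * (j : ℕ)))
      = Matrix.of fun i j : Fin n => θ i ^ μ j := by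
    ext i j
    rw [Matrix.of_apply, Matrix.of_apply,
      show (1 - (0:ℝ)) * μ j + 0 * ((j : ℕ) : ℝ) = μ j by ring]
  have h1 : 0 < (Matrix.of fun i j : Fin n => θ i ^ ((1 - (1:ℝ)) * μ j + 1 * (j : ℕ))).det := by
    rw [hM1, Matrix.det_vandermonde]
    exact Finset.prod_pos fun i _ => Finset.prod_pos fun j hj =>
      sub_pos.mpr (hθ (Finset.mem_Ioi.mp hj))
  have hne0 : (Matrix.of fun i j : Fin n => θ i ^ μ j).det ≠ 0 := by
    have := hne 0 (by norm_num)
    rwa [hM0] at this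
  by_contra hcon
  push_neg at hcon
  have hf0 : (Matrix.of fun i j : Fin n => θ i ^ ((1 - (0:ℝ)) * μ j + 0 * (j : ℕ))).det < 0 := by
    rw [hM0]
    exact lt_of_le_of_ne hcon hne0
  obtain ⟨t, ht, hft⟩ := intermediate_value_Icc (by norm_num : (0:ℝ) ≤ 1) hcont.continuousOn
    ⟨hf0.le, h1.le⟩
  exact hne t ht hft

open Matrix in
lemma detA_pos {n : ℕ} (θ : Fin n → ℝ) (hθ : StrictMono θ) (hpos : ∀ i, 0 < θ i)
    (α : ℝ) (hα0 : 0 < α) (hα1 : α < 1) (d : Fin n → ℝ) (hd : ∀ j, 0 < d j)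
    (μ' : ℝ) (hμ' : 0 < μ') :
    0 < (Matrix.of fun i j : Fin n =>
      d j * θ i ^ (j : ℕ) + μ' * (θ i ^ α * θ i ^ (j : ℕ))).det := by
  classical
  set u : Fin n → Fin n → ℝ := fun j i => θ i ^ ((j : ℕ) : ℝ) with hu
  set w : Fin n → Fin n → ℝ := fun j i => θ i ^ (((j : ℕ) : ℝ) + α) with hw
  set A : Matrix (Fin n) (Fin n) ℝ := Matrix.of fun i j =>
      d j * θ i ^ (j : ℕ) + μ' * (θ i ^ α * θ i ^ (j : ℕ)) with hA
  have hsplit : Aᵀ = (fun j => d j • u j) + (fun j => μ' • w j) := by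
    funext j i
    simp only [Matrix.transpose_apply, hA, Matrix.of_apply, Pi.add_apply, Pi.smul_apply,
      smul_eq_mul, hu, hw]
    rw [Real.rpow_add (hpos i), Real.rpow_natCast]
    ring
  have hdet : A.det = Matrix.detRowAlternating
      ((fun j => d j • u j) + (fun j => μ' • w j)) := by
    rw [← Matrix.det_transpose, hsplit]
    rfl
  have hadd := (Matrix.detRowAlternating (R := ℝ) (n := Fin n)).toMultilinearMap.map_add_univ
      (fun j => d j • u j) (fun j => μ' • w j)
  simp only [AlternatingMap.coe_multilinearMap] at hadd
  rw [hdet, hadd]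
  apply Finset.sum_pos _ Finset.univ_nonempty
  intro s _
  have hpiece : (s.piecewise (fun j => d j • u j) (fun j => μ' • w j)) =
      fun j => (if j ∈ s then d j else μ') • (if j ∈ s then u j else w j) := by
    funext j
    by_cases hj : j ∈ s <;> simp [Finset.piecewise, hj]
  have hsmul := (Matrix.detRowAlternating (R := ℝ) (n := Fin n)).toMultilinearMap.map_smul_univ
      (fun j => if j ∈ s then d j else μ') (fun j => if j ∈ s then u j else w j)
  simp only [AlternatingMap.coe_multilinearMap] at hsmul
  rw [hpiece, hsmul]
  have hνmono : StrictMono fun j : Fin n =>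
      if j ∈ s then ((j : ℕ) : ℝ) else ((j : ℕ) : ℝ) + α := by
    intro j j' hj
    have hnat : (j : ℕ) < (j' : ℕ) := hj
    have h2 : ((j : ℕ) : ℝ) + 1 ≤ ((j' : ℕ) : ℝ) := by exact_mod_cast Nat.succ_le_of_lt hnat
    by_cases h3 : j ∈ s <;> by_cases h4 : j' ∈ s <;> simp only [h3, h4, if_true, if_false] <;>
      linarith
  have hBT : (Matrix.of fun i j : Fin n =>
        θ i ^ (if j ∈ s then ((j : ℕ) : ℝ) else ((j : ℕ) : ℝ) + α))ᵀ
      = fun j => if j ∈ s then u j else w j := by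
    funext j i
    rw [Matrix.transpose_apply, Matrix.of_apply]
    by_cases hj : j ∈ s <;> simp [hj, hu, hw]
  have hrows : Matrix.detRowAlternating (fun j => if j ∈ s then u j else w j)
      = (Matrix.of fun i j : Fin n =>
          θ i ^ (if j ∈ s then ((j : ℕ) : ℝ) else ((j : ℕ) : ℝ) + α)).det := by
    rw [← hBT]
    exact Matrix.det_transpose _
  rw [hrows, smul_eq_mul]
  exact mul_pos (Finset.prod_pos fun j _ => by by_cases hj : j ∈ s <;> simp [hj, hd j, hμ'])
    (gvdm_pos θ hθ hpos _ hνmono)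

open Matrix

/-- For any `m ≥ 0`, `α ∈ (0,1)` and collocation points `0 < θ₀ < ⋯ < θ_m ≤ 1`,
the matrix `M = W⁻¹ D₁⁻¹ W D₂⁻¹` (with `W` the Vandermonde matrix `W_{ij} = θ_i^j`,
`D₁ = diag(θ_i^α)`, `D₂ = diag(c_j)`, `c_j = Γ(j+1)/Γ(j+1+α)`) has no negative real
eigenvalue. -/
theorem stmt_9 (α : ℝ) (hα : α ∈ Set.Ioo (0 : ℝ) 1) (m : ℕ)
    (θ : Fin (m + 1) → ℝ) (hθmono : StrictMono θ) (hθ0 : 0 < θ 0) (hθ1 : ∀ i, θ i ≤ 1)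
    (W D₁ D₂ : Matrix (Fin (m + 1)) (Fin (m + 1)) ℝ)
    (hW : W = Matrix.of fun i j : Fin (m + 1) => θ i ^ (j : ℕ))
    (hD₁ : D₁ = Matrix.diagonal fun i => θ i ^ α)
    (hD₂ : D₂ = Matrix.diagonal fun j : Fin (m + 1) =>
      Real.Gamma ((j : ℕ) + 1) / Real.Gamma ((j : ℕ) + 1 + α)) :
    ∀ lam : ℝ, lam < 0 →
      (W⁻¹ * D₁⁻¹ * W * D₂⁻¹ - lam • (1 : Matrix (Fin (m + 1)) (Fin (m + 1)) ℝ)).det ≠ 0 := by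
  intro lam hlam
  obtain ⟨hα0, hα1⟩ := hα
  have hθpos : ∀ i, 0 < θ i := fun i => lt_of_lt_of_le hθ0 (hθmono.monotone (Fin.zero_le i))
  set c : Fin (m + 1) → ℝ := fun j => Real.Gamma ((j : ℕ) + 1) / Real.Gamma ((j : ℕ) + 1 + α)
    with hc
  have hcpos : ∀ j, 0 < c j := fun j => div_pos
    (Real.Gamma_pos_of_pos (by positivity)) (Real.Gamma_pos_of_pos (by positivity))
  -- W is the Vandermonde matrix
  have hWv : W = Matrix.vandermonde θ := by rw [hW]; rfl
  have hWdet : W.det ≠ 0 := by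
    rw [hWv, Matrix.det_vandermonde]
    exact (Finset.prod_pos fun i _ => Finset.prod_pos fun j hj =>
      sub_pos.mpr (hθmono (Finset.mem_Ioi.mp hj))).ne'
  have hWu : IsUnit W.det := isUnit_iff_ne_zero.mpr hWdet
  have hD₁det : D₁.det ≠ 0 := by
    rw [hD₁, Matrix.det_diagonal]
    exact (Finset.prod_pos fun i _ => Real.rpow_pos_of_pos (hθpos i) α).ne'
  have hD₁u : IsUnit D₁.det := isUnit_iff_ne_zero.mpr hD₁det
  have hD₂inv : D₂⁻¹ = Matrix.diagonal fun j => (c j)⁻¹ := by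
    apply Matrix.inv_eq_right_inv
    rw [hD₂, Matrix.diagonal_mul_diagonal,
      show (fun j => c j * (c j)⁻¹) = fun _ => (1 : ℝ) from
        funext fun j => mul_inv_cancel₀ (hcpos j).ne', Matrix.diagonal_one]
  set A : Matrix (Fin (m + 1)) (Fin (m + 1)) ℝ := W * D₂⁻¹ - lam • (D₁ * W) with hAdef
  have hAentry : A = Matrix.of fun i j =>
      (c j)⁻¹ * θ i ^ (j : ℕ) + (-lam) * (θ i ^ α * θ i ^ (j : ℕ)) := by
    ext i j
    rw [hAdef]
    simp only [Matrix.sub_apply, Matrix.smul_apply, smul_eq_mul, hD₂inv, hW, hD₁,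
      Matrix.mul_diagonal, Matrix.diagonal_mul, Matrix.of_apply]
    ring
  have hdetA : 0 < A.det := by
    rw [hAentry]
    exact detA_pos θ hθmono hθpos α hα0 hα1 (fun j => (c j)⁻¹)
      (fun j => inv_pos.mpr (hcpos j)) (-lam) (by linarith)
  have h1 : D₁⁻¹ * (D₁ * W) = W := by
    rw [← Matrix.mul_assoc, Matrix.nonsing_inv_mul _ hD₁u, Matrix.one_mul]
  have h2 : W⁻¹ * W = 1 := Matrix.nonsing_inv_mul _ hWu
  have key : W⁻¹ * D₁⁻¹ * W * D₂⁻¹ - lam • 1 = W⁻¹ * (D₁⁻¹ * A) := by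
    rw [hAdef, Matrix.mul_sub, Matrix.mul_smul, h1, Matrix.mul_sub, Matrix.mul_smul, h2,
      ← Matrix.mul_assoc, ← Matrix.mul_assoc]
  rw [key, Matrix.det_mul, Matrix.det_mul]
  have hWinv : W⁻¹.det ≠ 0 := by
    rw [Matrix.det_nonsing_inv, Ring.inverse_eq_inv']
    exact inv_ne_zero hWdet
  have hD₁inv : D₁⁻¹.det ≠ 0 := by
    rw [Matrix.det_nonsing_inv, Ring.inverse_eq_inv']
    exact inv_ne_zero hD₁det
  exact mul_ne_zero hWinv (mul_ne_zero hD₁inv hdetA.ne')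
end

section
/- For any subset I ⊆ {0,…,m}, the determinant of the matrix M_I — whose k-th column equals the k-th column of WD₂⁻¹ if k ∉ I, and the k-th column of D₁W if k ∈ I — factors as (∏_{k∉I} c_k*) times the determinant of the generalized Vandermonde matrix (θ_i^{β_k}) with β_k = k if k ∉ I and β_k = k + α if k ∈ I, where c_k* = Γ(k+1+α)/Γ(k+1) > 0. In particular det M_I > 0 when 0 < θ₀ < ⋯ < θ_m. -/
open Finset

lemma gen_poly_zeros : ∀ (n : ℕ) (β : Fin n → ℝ), StrictMono β → ∀ (c : Fin n → ℝ)
    (x : Fin n → ℝ), StrictMono x → (∀ i, 0 < x i) →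
    (∀ i, ∑ k, c k * x i ^ β k = 0) → ∀ k, c k = 0 := by
  intro n
  induction n with
  | zero => intro _ _ _ _ _ _ _ k; exact k.elim0
  | succ n ih =>
    intro β hβ c x hx hx0 hf
    -- the function g(y) = ∑ c k * y ^ (β k - β 0)
    set g : ℝ → ℝ := fun y => ∑ k, c k * y ^ (β k - β 0) with hg
    have hgz : ∀ i, g (x i) = 0 := by
      intro i
      have : g (x i) = (x i) ^ (-(β 0)) * ∑ k, c k * x i ^ β k := by
        rw [Finset.mul_sum]
        refine Finset.sum_congr rfl fun k _ => ?_
        rw [Real.rpow_sub (hx0 i), div_eq_mul_inv, mul_comm ((x i)^(-(β 0))) _,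
          Real.rpow_neg (hx0 i).le, mul_assoc]
      rw [this, hf i, mul_zero]
    -- derivative of g at positive points
    have hderiv : ∀ y : ℝ, 0 < y →
        HasDerivAt g (∑ k, c k * ((β k - β 0) * y ^ (β k - β 0 - 1))) y := by
      intro y hy
      apply HasDerivAt.fun_sum
      intro k _
      exact (Real.hasDerivAt_rpow_const (Or.inl hy.ne')).const_mul (c k)
    -- Rolle on each interval
    have hrolle : ∀ i : Fin n, ∃ ξ, x i.castSucc < ξ ∧ ξ < x i.succ ∧
        ∑ k, c k * ((β k - β 0) * ξ ^ (β k - β 0 - 1)) = 0 := by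
      intro i
      have hab : x i.castSucc < x i.succ := hx Fin.castSucc_lt_succ
      have hcont : ContinuousOn g (Set.Icc (x i.castSucc) (x i.succ)) := by
        intro y hy
        have hypos : 0 < y := lt_of_lt_of_le (hx0 _) hy.1
        exact ((hderiv y hypos).continuousAt).continuousWithinAt
      obtain ⟨ξ, hξ, hd⟩ := exists_deriv_eq_zero hab hcont (by rw [hgz, hgz])
      have hξpos : 0 < ξ := lt_trans (hx0 _) hξ.1
      refine ⟨ξ, hξ.1, hξ.2, ?_⟩
      rw [← (hderiv ξ hξpos).deriv, hd]
    choose ξ hξ1 hξ2 hξ3 using hrolle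
    have hξmono : StrictMono ξ := by
      intro i j hij
      calc ξ i < x i.succ := hξ2 i
        _ ≤ x j.castSucc := by
            rcases eq_or_lt_of_le (Fin.succ_le_castSucc_iff.mpr hij) with h | h
            · rw [h]
            · exact le_of_lt (hx h)
        _ < ξ j := hξ1 j
    have hξpos : ∀ i, 0 < ξ i := fun i => lt_trans (hx0 _) (hξ1 i)
    -- apply IH to coefficients c (k.succ) * (β k.succ - β 0), exponents β k.succ - β 0 - 1
    have hexp : StrictMono (fun k : Fin n => β k.succ - β 0 - 1) := by
      intro i j hij
      have := hβ (Fin.succ_lt_succ_iff.mpr hij)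
      show β i.succ - β 0 - 1 < β j.succ - β 0 - 1
      linarith
    have hsum0 : ∀ i, ∑ k : Fin n, (c k.succ * (β k.succ - β 0)) * ξ i ^ (β k.succ - β 0 - 1) = 0 := by
      intro i
      have := hξ3 i
      rw [Fin.sum_univ_succ] at this
      simp only [sub_self, zero_mul, mul_zero, zero_add] at this
      rw [← this]
      exact Finset.sum_congr rfl fun k _ => by ring
    have hcs : ∀ k : Fin n, c k.succ * (β k.succ - β 0) = 0 :=
      ih _ hexp _ ξ hξmono hξpos hsum0
    have hcsucc : ∀ k : Fin n, c k.succ = 0 := by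
      intro k
      have hne : β k.succ - β 0 ≠ 0 := sub_ne_zero.mpr (hβ (Fin.succ_pos k)).ne'
      exact (mul_eq_zero.mp (hcs k)).resolve_right hne
    have hc0 : c 0 = 0 := by
      have := hf 0
      rw [Fin.sum_univ_succ] at this
      simp only [hcsucc, zero_mul, Finset.sum_const_zero, add_zero] at this
      have hpow : (0:ℝ) < x 0 ^ β 0 := Real.rpow_pos_of_pos (hx0 0) _
      exact (mul_eq_zero.mp this).resolve_right hpow.ne'
    intro k
    rcases k.eq_zero_or_eq_succ with h | ⟨j, rfl⟩
    · rw [h]; exact hc0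
    · exact hcsucc j

lemma gen_vandermonde_det_ne_zero {n : ℕ} (β : Fin n → ℝ) (hβ : StrictMono β)
    (θ : Fin n → ℝ) (hθ : StrictMono θ) (hθ0 : ∀ i, 0 < θ i) :
    (Matrix.of fun i k : Fin n => θ i ^ β k).det ≠ 0 := by
  intro hdet
  obtain ⟨v, hv, hmv⟩ := Matrix.exists_mulVec_eq_zero_iff.mpr hdet
  apply hv
  funext k
  refine gen_poly_zeros n β hβ v θ hθ hθ0 (fun i => ?_) k
  have := congrFun hmv i
  simpa [Matrix.mulVec, dotProduct, mul_comm] using this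

lemma gen_vandermonde_det_pos {n : ℕ} (β : Fin n → ℝ) (hβ : StrictMono β)
    (θ : Fin n → ℝ) (hθ : StrictMono θ) (hθ0 : ∀ i, 0 < θ i) :
    0 < (Matrix.of fun i k : Fin n => θ i ^ β k).det := by
  set F : ℝ → ℝ := fun t =>
    (Matrix.of fun i k : Fin n => θ i ^ ((1 - t) * (k : ℕ) + t * β k)).det with hF
  have hmono : ∀ t ∈ Set.Icc (0:ℝ) 1,
      StrictMono (fun k : Fin n => (1 - t) * (k : ℕ) + t * β k) := by
    intro t ht i j hij
    have h1 : ((i:ℕ):ℝ) < ((j:ℕ):ℝ) := by exact_mod_cast hij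
    have h2 : β i < β j := hβ hij
    have ht0 := ht.1; have ht1 := ht.2
    show (1 - t) * (i : ℕ) + t * β i < (1 - t) * (j : ℕ) + t * β j
    rcases eq_or_lt_of_le ht1 with h | h
    · subst h; simp only [sub_self, zero_mul, one_mul, zero_add]; linarith
    · have h3 := mul_lt_mul_of_pos_left h1 (by linarith : (0:ℝ) < 1 - t)
      have h4 := mul_le_mul_of_nonneg_left h2.le ht0
      linarith
  have hFne : ∀ t ∈ Set.Icc (0:ℝ) 1, F t ≠ 0 := fun t ht =>
    gen_vandermonde_det_ne_zero _ (hmono t ht) θ hθ hθ0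
  have hFcont : Continuous F := by
    apply Continuous.matrix_det
    apply continuous_matrix
    intro i k
    have : (fun t : ℝ => (Matrix.of fun i k : Fin n =>
        θ i ^ ((1 - t) * (k : ℕ) + t * β k)) i k) =
        fun t : ℝ => Real.exp (Real.log (θ i) * ((1 - t) * (k : ℕ) + t * β k)) := by
      funext t
      simp only [Matrix.of_apply]
      rw [Real.rpow_def_of_pos (hθ0 i)]
    rw [this]
    fun_prop
  have hF0 : 0 < F 0 := by
    have : F 0 = (Matrix.vandermonde θ).det := by
      simp only [hF]
      congr 1
      funext i k
      simp [Matrix.vandermonde, Real.rpow_natCast]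
    rw [this, Matrix.det_vandermonde]
    apply Finset.prod_pos
    intro i _
    apply Finset.prod_pos
    intro j hj
    exact sub_pos.mpr (hθ (Finset.mem_Ioi.mp hj))
  have hF1 : F 1 = (Matrix.of fun i k : Fin n => θ i ^ β k).det := by
    simp only [hF]
    congr 1
    funext i k
    norm_num
  rw [← hF1]
  by_contra h
  push_neg at h
  have hlt : F 1 < 0 := lt_of_le_of_ne h (hFne 1 (by norm_num))
  have := intermediate_value_Icc' (by norm_num : (0:ℝ) ≤ 1) hFcont.continuousOn
    (Set.mem_Icc.mpr ⟨hlt.le, hF0.le⟩)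
  obtain ⟨t, ht, hFt⟩ := this
  exact hFne t ht hFt

/-- For any index set `I ⊆ {0,…,m}`, the matrix `M_I` — whose `k`-th column is the `k`-th
column of `W D₂⁻¹` (entries `c_k^* θ_i^k`) if `k ∉ I`, and of `D₁ W` (entries `θ_i^{α+k}`)
if `k ∈ I` — has determinant `(∏_{k∉I} c_k^*) · det (θ_i^{β_k})` with `β_k = k` for `k ∉ I`
and `β_k = k + α` for `k ∈ I`, where `c_k^* = Γ(k+1+α)/Γ(k+1) > 0`; in particular
`det M_I > 0`. -/
theorem stmt_11 (α : ℝ) (hα : α ∈ Set.Ioo (0 : ℝ) 1) (m : ℕ)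
    (θ : Fin (m + 1) → ℝ) (hθmono : StrictMono θ) (hθ0 : 0 < θ 0)
    (I : Finset (Fin (m + 1)))
    (cstar : Fin (m + 1) → ℝ)
    (hcstar : ∀ k : Fin (m + 1),
      cstar k = Real.Gamma ((k : ℕ) + 1 + α) / Real.Gamma ((k : ℕ) + 1))
    (β : Fin (m + 1) → ℝ)
    (hβ : ∀ k : Fin (m + 1), β k = if k ∈ I then (k : ℕ) + α else (k : ℕ))
    (MI : Matrix (Fin (m + 1)) (Fin (m + 1)) ℝ)
    (hMI : MI = Matrix.of fun i k : Fin (m + 1) =>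
      if k ∈ I then θ i ^ (α + (k : ℕ)) else cstar k * θ i ^ ((k : ℕ) : ℝ)) :
    MI.det = (∏ k ∈ Iᶜ, cstar k) *
        (Matrix.of fun i k : Fin (m + 1) => θ i ^ β k).det ∧
      0 < MI.det := by
  obtain ⟨hα0, hα1⟩ := hα
  have hθpos : ∀ i, 0 < θ i := fun i =>
    lt_of_lt_of_le hθ0 (hθmono.monotone (Fin.zero_le i))
  have hcpos : ∀ k, 0 < cstar k := by
    intro k
    rw [hcstar k]
    apply div_pos (Real.Gamma_pos_of_pos (by positivity)) (Real.Gamma_pos_of_pos (by positivity))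
  have hβmono : StrictMono β := by
    intro k l hkl
    have hnat : ((k:ℕ):ℝ) < ((l:ℕ):ℝ) := by exact_mod_cast hkl
    have hnat1 : ((k:ℕ):ℝ) + 1 ≤ ((l:ℕ):ℝ) := by
      have : (k:ℕ) + 1 ≤ (l:ℕ) := hkl
      exact_mod_cast this
    rw [hβ k, hβ l]
    by_cases hk : k ∈ I <;> by_cases hl : l ∈ I
    · rw [if_pos hk, if_pos hl]; linarith
    · rw [if_pos hk, if_neg hl]; linarith
    · rw [if_neg hk, if_pos hl]; linarith
    · rw [if_neg hk, if_neg hl]; linarith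
  set d : Fin (m + 1) → ℝ := fun k => if k ∈ I then 1 else cstar k with hd
  have hfactor : MI = (Matrix.of fun i k : Fin (m + 1) => θ i ^ β k) * Matrix.diagonal d := by
    rw [hMI]
    ext i k
    rw [Matrix.mul_diagonal]
    simp only [Matrix.of_apply, hd, hβ k]
    by_cases hk : k ∈ I
    · simp [hk, add_comm α ((k:ℕ):ℝ)]
    · simp [hk, mul_comm]
  have hprodd : ∏ k, d k = ∏ k ∈ Iᶜ, cstar k := by
    rw [← Finset.prod_mul_prod_compl I d]
    have h1 : ∏ k ∈ I, d k = 1 := Finset.prod_eq_one (fun k hk => by simp [hd, hk])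
    have h2 : ∏ k ∈ Iᶜ, d k = ∏ k ∈ Iᶜ, cstar k :=
      Finset.prod_congr rfl (fun k hk => by simp [hd, (Finset.mem_compl.mp hk)])
    rw [h1, h2, one_mul]
  have hdet : MI.det = (∏ k ∈ Iᶜ, cstar k) *
      (Matrix.of fun i k : Fin (m + 1) => θ i ^ β k).det := by
    rw [hfactor, Matrix.det_mul, Matrix.det_diagonal, hprodd, mul_comm]
  refine ⟨hdet, ?_⟩
  rw [hdet]
  apply mul_pos
  · exact Finset.prod_pos (fun k _ => hcpos k)
  · exact gen_vandermonde_det_pos β hβmono θ hθmono hθpos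
end

section
/- Let α ∈ (0,1) and let 0 < θ₀ < θ₁ ≤ 1 satisfy θ₀/θ₁ ≤ 1/(1+α). Then with D = diag(θ₁, θ₀), W the 2×2 Vandermonde matrix with rows (1, θ₀), (1, θ₁), and D₂* = diag(c₀⁻¹, c₁⁻¹) with c_j = Γ(j+1)/Γ(j+1+α), the symmetric matrix Wᵀ D W D₂* + (Wᵀ D W D₂*)ᵀ is positive semidefinite. -/
open Matrix

lemma t2_aux (a b c d : ℝ) : (!![a, b; c, d])ᵀ = !![a, c; b, d] := by
  ext i j; fin_cases i <;> fin_cases j <;> rfl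

lemma psd2_aux (a b c : ℝ) (ha : 0 ≤ a) (hc : 0 ≤ c) (hdet : b ^ 2 ≤ a * c) :
    (!![a, b; b, c]).PosSemidef := by
  refine Matrix.PosSemidef.of_dotProduct_mulVec_nonneg ?_ ?_
  · ext i j
    fin_cases i <;> fin_cases j <;> simp [Matrix.conjTranspose_apply]
  · intro x
    have hq : (star x ⬝ᵥ (!![a, b; b, c]).mulVec x) =
        a * x 0 ^ 2 + 2 * b * (x 0 * x 1) + c * x 1 ^ 2 := by
      simp [Matrix.mulVec, dotProduct, Fin.sum_univ_two]
      ring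
    rw [hq]
    rcases ha.eq_or_lt with h | h
    · have hb : b = 0 := by nlinarith [sq_nonneg b]
      subst hb
      simp [← h]
      positivity
    · nlinarith [sq_nonneg (a * x 0 + b * x 1), mul_nonneg (sub_nonneg.2 hdet) (sq_nonneg (x 1))]

/-- For `m = 1`, `α ∈ (0,1)` and `0 < θ₀ < θ₁ ≤ 1` with `θ₀/θ₁ ≤ 1/(1+α)`, letting
`D = diag(θ₁, θ₀)`, `W = [[1, θ₀],[1, θ₁]]` and `D₂* = diag(Γ(1+α), Γ(2+α))`,
the symmetric matrix `WᵀDWD₂* + (WᵀDWD₂*)ᵀ` is positive semidefinite. -/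
theorem stmt_13 (α : ℝ) (hα : α ∈ Set.Ioo (0 : ℝ) 1)
    (θ₀ θ₁ : ℝ) (h0 : 0 < θ₀) (h01 : θ₀ < θ₁) (h1 : θ₁ ≤ 1)
    (hratio : θ₀ / θ₁ ≤ 1 / (1 + α))
    (W D D₂s : Matrix (Fin 2) (Fin 2) ℝ)
    (hW : W = !![1, θ₀; 1, θ₁])
    (hD : D = Matrix.diagonal ![θ₁, θ₀])
    (hD₂s : D₂s = Matrix.diagonal ![Real.Gamma (1 + α), Real.Gamma (2 + α)]) :
    (Wᵀ * D * W * D₂s + (Wᵀ * D * W * D₂s)ᵀ).PosSemidef := by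
  obtain ⟨hα0, hα1⟩ := hα
  set g0 := Real.Gamma (1 + α) with hg0
  set g1 := Real.Gamma (2 + α) with hg1
  have hg0pos : 0 < g0 := Real.Gamma_pos_of_pos (by linarith)
  have hg1eq : g1 = (1 + α) * g0 := by
    rw [hg1, hg0, show (2 : ℝ) + α = (1 + α) + 1 by ring,
      Real.Gamma_add_one (by positivity)]
  have hg1pos : 0 < g1 := by rw [hg1eq]; positivity
  have hθ1 : 0 < θ₁ := h0.trans h01
  have hrat : θ₀ * (1 + α) ≤ θ₁ := by
    rw [div_le_div_iff₀ hθ1 (by linarith)] at hratio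
    linarith
  have hM : Wᵀ * D * W * D₂s + (Wᵀ * D * W * D₂s)ᵀ =
      !![2 * g0 * (θ₀ + θ₁), 2 * θ₀ * θ₁ * (g0 + g1);
         2 * θ₀ * θ₁ * (g0 + g1), 2 * g1 * θ₀ * θ₁ * (θ₀ + θ₁)] := by
    have hD1 : (Matrix.diagonal ![θ₁, θ₀] : Matrix (Fin 2) (Fin 2) ℝ) = !![θ₁, 0; 0, θ₀] := by
      ext i j; fin_cases i <;> fin_cases j <;> simp [Matrix.diagonal]
    have hD2 : (Matrix.diagonal ![g0, g1] : Matrix (Fin 2) (Fin 2) ℝ) = !![g0, 0; 0, g1] := by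
      ext i j; fin_cases i <;> fin_cases j <;> simp [Matrix.diagonal]
    subst hW hD hD₂s
    rw [hD1, hD2, show (!![1, θ₀; 1, θ₁] : Matrix (Fin 2) (Fin 2) ℝ)ᵀ = !![1, 1; θ₀, θ₁] from t2_aux 1 θ₀ 1 θ₁,
      Matrix.mul_fin_two, Matrix.mul_fin_two, Matrix.mul_fin_two, t2_aux]
    ext i j
    fin_cases i <;> fin_cases j <;> simp <;> ring
  rw [hM]
  apply psd2_aux
  · positivity
  · positivity
  · have key : θ₀ * θ₁ * (2 + α) ^ 2 ≤ (1 + α) * (θ₀ + θ₁) ^ 2 := by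
      nlinarith [mul_nonneg (sub_nonneg.2 hrat) (le_of_lt (show (0:ℝ) < (1 + α) * θ₁ - θ₀ by nlinarith))]
    calc (2 * θ₀ * θ₁ * (g0 + g1)) ^ 2
        = (4 * g0 ^ 2 * θ₀ * θ₁) * (θ₀ * θ₁ * (2 + α) ^ 2) := by rw [hg1eq]; ring
      _ ≤ (4 * g0 ^ 2 * θ₀ * θ₁) * ((1 + α) * (θ₀ + θ₁) ^ 2) :=
          mul_le_mul_of_nonneg_left key (by positivity)
      _ = 2 * g0 * (θ₀ + θ₁) * (2 * g1 * θ₀ * θ₁ * (θ₀ + θ₁)) := by rw [hg1eq]; ring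
end
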